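/- For any x ∈ ℝ^{2m-1} with x_m = x_{m+1} = ⋯ = x_{2m-1} = 0, the convex function f_Nc satisfies f_Nc(x; m) - inf_{z ∈ ℝ^{2m-1}} f_Nc(z; m) ≥ 1/(16m). -/

import Mathlib

open scoped RealInnerProductSpace BigOperators

/-- Nesterov's chain quadratic `Q(x; ξ, m, ζ)` on `ℝ^{n+1}` (so `m = n+1 ≥ 1`). -/
noncomputable def Qfun {n : ℕ} (ξ ζ : ℝ) (x : EuclideanSpace ℝ (Fin (n + 1))) : ℝ :=
  ξ / 2 * (x 0 - 1) ^ 2 + 1 / 2 * ∑ t : Fin n, (x t.succ - x t.castSucc) ^ 2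
    + ζ / 2 * (x (Fin.last n)) ^ 2

/-- Nesterov's convex hard function `f_Nc(x; m) = (1/4)Q(x; 1, 2m-1, 1)` on `ℝ^{2m-1}`. -/
noncomputable def fNc (m : ℕ) (x : EuclideanSpace ℝ (Fin (2 * m - 2 + 1))) : ℝ :=
  1 / 4 * Qfun 1 1 x

/-! Prepend the anchor value `1` to `x`. Then `Q(x; 1, ·, ζ)` is at least half the sum of the squared
increments of this chain, and the first `m` increments telescope from `1` to `x_{m-1} = 0`, so by
Cauchy–Schwarz `f_Nc(x) ≥ 1/(8m)`. The linear profile `x_i = 1 - (i + 1)/(2m)` has all `2m`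
increments (including the final drop to `0`) equal to `1/(2m)`, so `f_Nc` takes the value `1/(16m)`
there and the infimum is at most that. -/

open Finset

theorem sq_sub_le_mul_sum_sq_sub (a : ℕ → ℝ) (n : ℕ) :
    (a n - a 0) ^ 2 ≤ n * ∑ k ∈ range n, (a (k + 1) - a k) ^ 2 := by
  rw [← sum_range_sub]
  simpa using sq_sum_le_card_mul_sum_sq (s := range n) (f := fun k => a (k + 1) - a k)

namespace Qfun

variable {n : ℕ}

theorem nonneg {ξ ζ : ℝ} (hξ : 0 ≤ ξ) (hζ : 0 ≤ ζ) (x : EuclideanSpace ℝ (Fin (n + 1))) :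
    0 ≤ Qfun ξ ζ x := by
  have : 0 ≤ ∑ t : Fin n, (x t.succ - x t.castSucc) ^ 2 := sum_nonneg fun _ _ => sq_nonneg _
  unfold Qfun
  positivity

def anchored (x : EuclideanSpace ℝ (Fin (n + 1))) : ℕ → ℝ
  | 0 => 1
  | j + 1 => if h : j < n + 1 then x ⟨j, h⟩ else 0

theorem one_eq_sum_anchored (ζ : ℝ) (x : EuclideanSpace ℝ (Fin (n + 1))) :
    Qfun 1 ζ x = 1 / 2 * ∑ k ∈ range (n + 1), (anchored x (k + 1) - anchored x k) ^ 2
      + ζ / 2 * x (Fin.last n) ^ 2 := by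
  rw [sum_range_succ', ← Fin.sum_univ_eq_sum_range]
  simp only [Qfun, anchored, Fin.succ, Fin.castSucc, Fin.castAdd, Fin.castLE, Fin.is_lt, Fin.is_le',
    add_lt_add_iff_right, dite_true, Nat.lt_add_one_iff, zero_le, Fin.zero_eta]
  ring

theorem one_sub_apply_sq_div_le {ζ : ℝ} (hζ : 0 ≤ ζ) (x : EuclideanSpace ℝ (Fin (n + 1)))
    (k : Fin (n + 1)) : (1 - x k) ^ 2 / (2 * (k + 1)) ≤ Qfun 1 ζ x := by
  set S := fun j => ∑ i ∈ range j, (anchored x (i + 1) - anchored x i) ^ 2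
  have hchain : (1 - x k) ^ 2 ≤ (k + 1) * S (k + 1) := by
    have h := sq_sub_le_mul_sum_sq_sub (anchored x) (k + 1)
    have hend : anchored x (k + 1) - anchored x 0 = -(1 - x k) := by simp [anchored, k.isLt]
    rwa [hend, neg_sq, Nat.cast_succ] at h
  have hprefix : S (k + 1) ≤ S (n + 1) :=
    sum_le_sum_of_subset_of_nonneg (range_subset_range.2 k.isLt) fun _ _ _ => sq_nonneg _
  have hQ : 1 / 2 * S (n + 1) ≤ Qfun 1 ζ x := by
    rw [one_eq_sum_anchored]
    exact le_add_of_nonneg_right (by positivity)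
  rw [div_le_iff₀ (by positivity)]
  calc (1 - x k) ^ 2 ≤ (k + 1) * S (k + 1) := hchain
    _ ≤ (k + 1) * S (n + 1) := by gcongr
    _ ≤ Qfun 1 ζ x * (2 * (k + 1)) := by nlinarith [hQ]

noncomputable def linearPath (n : ℕ) : EuclideanSpace ℝ (Fin (n + 1)) :=
  WithLp.toLp 2 fun i => 1 - (i + 1) / (n + 2)

theorem anchored_linearPath {j : ℕ} (hj : j ≤ n + 1) :
    anchored (linearPath n) j = 1 - j / (n + 2) := by
  cases j with
  | zero => simp [anchored]
  | succ j => simp [anchored, linearPath, show j < n + 1 by omega]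

theorem one_one_linearPath : Qfun 1 1 (linearPath n) = 1 / (2 * (n + 2)) := by
  have hstep : ∀ k ∈ range (n + 1),
      (anchored (linearPath n) (k + 1) - anchored (linearPath n) k) ^ 2 = 1 / (n + 2) ^ 2 := by
    intro k hk
    rw [mem_range] at hk
    rw [anchored_linearPath (by omega), anchored_linearPath (by omega)]
    push_cast
    field_simp
    ring
  rw [one_eq_sum_anchored, sum_congr rfl hstep]
  simp only [sum_const, card_range, nsmul_eq_mul, linearPath, Fin.val_last]
  push_cast
  field_simp
  ring

end Qfun

theorem fNc_nonneg (m : ℕ) (x : EuclideanSpace ℝ (Fin (2 * m - 2 + 1))) : 0 ≤ fNc m x :=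
  mul_nonneg (by norm_num) (Qfun.nonneg zero_le_one zero_le_one x)

theorem iInf_fNc_le {m : ℕ} (hm : 1 ≤ m) :
    ⨅ z : EuclideanSpace ℝ (Fin (2 * m - 2 + 1)), fNc m z ≤ 1 / (16 * m) := by
  refine (ciInf_le ⟨0, Set.forall_mem_range.2 (fNc_nonneg m)⟩ (Qfun.linearPath _)).trans_eq ?_
  have hcast : ((2 * m - 2 : ℕ) : ℝ) + 2 = 2 * m := by
    rw [Nat.cast_sub (by omega)]
    push_cast
    ring
  rw [fNc, Qfun.one_one_linearPath, hcast]
  field_simp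
  ring

/-- if the (1-indexed) coordinates `m, m+1, …, 2m-1` of `x` all vanish
(0-indexed: all coordinates of index `≥ m-1`), then
`f_Nc(x; m) - inf f_Nc ≥ 1/(16m)`. -/
theorem fNc_lower_gap_of_tail_zero (m : ℕ) (hm : 1 ≤ m)
    (x : EuclideanSpace ℝ (Fin (2 * m - 2 + 1)))
    (hx : ∀ j : Fin (2 * m - 2 + 1), m - 1 ≤ (j : ℕ) → x j = 0) :
    fNc m x - ⨅ z : EuclideanSpace ℝ (Fin (2 * m - 2 + 1)), fNc m z ≥ 1 / (16 * m) := by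
  have hlower : 1 / (8 * m) ≤ fNc m x := by
    have h := Qfun.one_sub_apply_sq_div_le zero_le_one x ⟨m - 1, by omega⟩
    rw [hx _ le_rfl, Fin.val_mk, ← Nat.cast_add_one, Nat.sub_add_cancel hm, sub_zero,
      one_pow] at h
    calc (1 / (8 * m) : ℝ) = 1 / 4 * (1 / (2 * m)) := by ring
      _ ≤ fNc m x := by rw [fNc]; gcongr
  have hgap : (1 / (8 * m) - 1 / (16 * m) : ℝ) = 1 / (16 * m) := by ring
  linarith [iInf_fNc_le hm]
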